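/- Let p be an odd prime, r ≥ 2, l ∈ {0,…,p−1}, D_l = {u : 0 ≤ u < p^{r+1}, gcd(u,p)=1, H_{r−1}(u)=l}, and let θ be an element of an algebraic closure of F₂ with θ^{p^r} = 1 but θ^p ≠ 1. Then Σ_{u ∈ D_l} θ^u = 0. -/

import Mathlib

/-- The Euler quotient `Q_t(u)` modulo `p^t`, zero when `gcd(u,p) > 1` (and `Q_0 = 0`). -/
def eulerQuotient (p t u : ℕ) : ℕ :=
  if Nat.Coprime u p then (u ^ (p ^ t).totient - 1) / p ^ t % p ^ t else 0

/-- The highest-level quotient `H_{r-1}(u) = (Q_r(u) - Q_{r-1}(u))/p^{r-1} mod p`. -/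
def levelQuotient (p r u : ℕ) : ℕ :=
  ((((eulerQuotient p r u : ℤ) - (eulerQuotient p (r - 1) u : ℤ)) / (p : ℤ) ^ (r - 1))
    % (p : ℤ)).toNat

/-!
Write `u = v + k p^r` with `v < p^r` and `k < p`. Then `θ^u = θ^v`, and a first-order binomial
expansion shows that `Q_{r-1}(u) = Q_{r-1}(v)` while `Q_r(u) ≡ Q_r(v) + φ(p^r) v^{φ(p^r)-1} k`
modulo `p^r`; hence `H_{r-1}(v + k p^r) ≡ H_{r-1}(v) - v^{φ(p^r)-1} k (mod p)` is an affine
function of `k` with unit slope, and it takes the value `l` for exactly one `k < p`. The sum over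
`D_l` therefore collapses to `∑_{v < p^r, p ∤ v} θ^v`, which vanishes: grouping `v` by its
residue `v mod p`, each group is a geometric sum in `θ^p ≠ 1`, a root of `X^{p^{r-1}} - 1`.
-/

open Finset
open scoped Nat

theorem sum_range_mul_eq_sum_sum {M : Type*} [AddCommMonoid M] (f : ℕ → M) (m n : ℕ) :
    ∑ u ∈ range (m * n), f u = ∑ v ∈ range m, ∑ k ∈ range n, f (v + k * m) := by
  induction n with
  | zero => simp
  | succ n ih =>
    simp only [Nat.mul_succ, sum_range_add, ih, sum_range_succ, sum_add_distrib]
    congr 1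
    exact sum_congr rfl fun v _ => by rw [add_comm, mul_comm]

theorem sum_range_mul_ite_coprime_pow_eq_zero {K : Type*} [Field K] {p m : ℕ} {θ : K}
    (hθ : θ ^ (p * m) = 1) (hθp : θ ^ p ≠ 1) :
    ∑ u ∈ range (p * m), (if u.Coprime p then θ ^ u else 0) = 0 := by
  have hgeom : ∑ k ∈ range m, (θ ^ p) ^ k = 0 := by
    rw [geom_sum_eq hθp, ← pow_mul, hθ, sub_self, zero_div]
  rw [sum_range_mul_eq_sum_sum]
  refine sum_eq_zero fun v _ => ?_
  by_cases hv : v.Coprime p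
  · simp [Nat.coprime_add_mul_right_left, pow_add, pow_mul', ← mul_sum, hgeom]
  · simp [Nat.coprime_add_mul_right_left, hv]

theorem Nat.coprime_add_mul_pow_left_iff {v k p r : ℕ} (hr : 0 < r) :
    (v + k * p ^ r).Coprime p ↔ v.Coprime p := by
  rw [← Nat.coprime_pow_right_iff hr, Nat.coprime_add_mul_right_left,
    Nat.coprime_pow_right_iff hr]

theorem Int.ediv_modEq_ediv_add {a b c d m : ℤ} (hd : d ≠ 0)
    (h : a ≡ b + d * c [ZMOD d * m]) : a / d ≡ b / d + c [ZMOD m] := by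
  obtain ⟨t, ht⟩ := Int.modEq_iff_add_fac.mp h
  have ha : a = b + d * (c - m * t) := by linear_combination -ht
  rw [ha, Int.add_mul_ediv_left _ _ hd]
  exact Int.modEq_iff_add_fac.mpr ⟨t, by ring⟩

section EulerQuotient

variable {p : ℕ}

theorem eulerQuotient_natCast (hp : p ≠ 1) {u : ℕ} (hu : u.Coprime p) (t : ℕ) :
    (eulerQuotient p t u : ℤ) =
      (((u : ℤ) ^ φ (p ^ t) - 1) / (p : ℤ) ^ t) % (p : ℤ) ^ t := by
  have hu0 : u ≠ 0 := by rintro rfl; exact hp (Nat.coprime_zero_left p |>.mp hu)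
  have hpow : 1 ≤ u ^ φ (p ^ t) := Nat.one_le_pow _ _ (Nat.pos_of_ne_zero hu0)
  rw [eulerQuotient, if_pos hu, Int.natCast_mod, Int.natCast_div]
  push_cast [hpow]
  rfl

theorem eulerQuotient_add_mul_pow_modEq (hp : 1 < p) {v j t : ℕ} (hv : v.Coprime p)
    (hu : (v + j * p ^ t).Coprime p) :
    (eulerQuotient p t (v + j * p ^ t) : ℤ) ≡
      eulerQuotient p t v + φ (p ^ t) * (v : ℤ) ^ (φ (p ^ t) - 1) * j [ZMOD (p : ℤ) ^ t] := by
  set n := φ (p ^ t)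
  set P : ℤ := (p : ℤ) ^ t
  have hbinom : ((v + j * p ^ t : ℕ) : ℤ) ^ n - 1 ≡
      ((v : ℤ) ^ n - 1) + P * (n * v ^ (n - 1) * j) [ZMOD P * P] := by
    refine (Int.modEq_iff_dvd.mpr ?_).symm
    have := sq_dvd_add_pow_sub_sub ((j : ℤ) * P) (v : ℤ) n
    refine dvd_trans ⟨(j : ℤ) ^ 2, by ring⟩ (this.trans (dvd_of_eq ?_))
    push_cast
    ring
  rw [eulerQuotient_natCast hp.ne' hu, eulerQuotient_natCast hp.ne' hv]
  have hP : P ≠ 0 := pow_ne_zero _ (by exact_mod_cast (zero_lt_one.trans hp).ne')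
  exact (Int.mod_modEq _ _).trans <| (Int.ediv_modEq_ediv_add hP hbinom).trans <|
    ((Int.mod_modEq _ _).symm.add_right _)

theorem pow_dvd_totient_pow_mul_self (hp : p.Prime) (t : ℕ) : p ^ t ∣ φ (p ^ t) * p := by
  rcases t with _ | s
  · simp
  · rw [Nat.totient_prime_pow_succ hp, pow_succ]
    exact ⟨p - 1, by ring⟩

theorem eulerQuotient_add_mul_pow_succ (hp : p.Prime) (v k t : ℕ) :
    eulerQuotient p t (v + k * p ^ (t + 1)) = eulerQuotient p t v := by
  have hcop := Nat.coprime_add_mul_pow_left_iff (v := v) (k := k) (p := p) t.succ_pos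
  by_cases hv : v.Coprime p
  swap
  · simp [eulerQuotient, hv, hcop]
  have hu : (v + k * p * p ^ t).Coprime p := by rwa [mul_assoc, ← pow_succ', hcop]
  have hdvd :
      (p : ℤ) ^ t ∣ φ (p ^ t) * (v : ℤ) ^ (φ (p ^ t) - 1) * ((k * p : ℕ) : ℤ) := by
    have := Int.natCast_dvd_natCast.mpr (pow_dvd_totient_pow_mul_self hp t)
    push_cast at this ⊢
    exact this.trans (Dvd.intro ((v : ℤ) ^ (φ (p ^ t) - 1) * k) (by ring))
  have h := (eulerQuotient_add_mul_pow_modEq hp.one_lt hv hu).trans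
    ((Int.modEq_zero_iff_dvd.mpr hdvd).add_left _)
  rw [add_zero, mul_assoc, ← pow_succ'] at h
  rw [← Int.natCast_inj]
  rw [eulerQuotient_natCast hp.ne_one (hcop.mpr hv), eulerQuotient_natCast hp.ne_one hv] at h ⊢
  simpa only [Int.ModEq, Int.emod_emod] using h

end EulerQuotient

section LevelQuotient

variable {p r : ℕ}

theorem levelQuotient_lt (hp : 0 < p) (r u : ℕ) : levelQuotient p r u < p := by
  have hp' : (0 : ℤ) < p := by exact_mod_cast hp
  rw [levelQuotient, Int.toNat_lt (Int.emod_nonneg _ hp'.ne')]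
  exact Int.emod_lt_of_pos _ hp'

theorem levelQuotient_natCast_zmod (hp : p ≠ 0) (u : ℕ) :
    (levelQuotient p r u : ZMod p) =
      ((((eulerQuotient p r u : ℤ) - eulerQuotient p (r - 1) u) / (p : ℤ) ^ (r - 1) : ℤ) :
        ZMod p) := by
  rw [levelQuotient, ← Int.cast_natCast,
    Int.toNat_of_nonneg (Int.emod_nonneg _ (by exact_mod_cast hp)), ZMod.intCast_mod]

theorem levelQuotient_add_mul_pow (hp : p.Prime) (hr : 0 < r) {v : ℕ} (hv : v.Coprime p)
    (k : ℕ) :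
    (levelQuotient p r (v + k * p ^ r) : ZMod p) =
      levelQuotient p r v - (v : ZMod p) ^ (φ (p ^ r) - 1) * k := by
  obtain ⟨t, rfl⟩ : ∃ t, r = t + 1 := ⟨r - 1, by omega⟩
  have hQr := eulerQuotient_add_mul_pow_modEq (j := k) hp.one_lt hv
    ((Nat.coprime_add_mul_pow_left_iff hr).mpr hv)
  have hQt := eulerQuotient_add_mul_pow_succ hp v k t
  rw [Nat.totient_prime_pow_succ hp] at hQr ⊢
  set u := v + k * p ^ (t + 1)
  have hX : (eulerQuotient p (t + 1) u : ℤ) - eulerQuotient p t u ≡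
      (eulerQuotient p (t + 1) v - eulerQuotient p t v) +
        (p : ℤ) ^ t * (((p : ℤ) - 1) * (v : ℤ) ^ (p ^ t * (p - 1) - 1) * k)
      [ZMOD (p : ℤ) ^ t * p] := by
    rw [hQt, ← pow_succ]
    convert hQr.sub_right (eulerQuotient p t v : ℤ) using 1
    push_cast [hp.one_le]
    ring
  have hH := (ZMod.intCast_eq_intCast_iff _ _ p).mpr
    (Int.ediv_modEq_ediv_add (pow_ne_zero _ (by exact_mod_cast hp.ne_zero)) hX)
  rw [levelQuotient_natCast_zmod hp.ne_zero, levelQuotient_natCast_zmod hp.ne_zero,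
    Nat.add_sub_cancel, hH]
  push_cast
  rw [ZMod.natCast_self]
  ring

theorem levelQuotient_add_mul_pow_eq_iff [hp : Fact p.Prime] (hr : 0 < r) {v k l : ℕ}
    (hv : v.Coprime p) (hk : k < p) (hl : l < p) :
    levelQuotient p r (v + k * p ^ r) = l ↔
      k = (((levelQuotient p r v : ZMod p) - l) / (v : ZMod p) ^ (φ (p ^ r) - 1)).val := by
  have hc : (v : ZMod p) ^ (φ (p ^ r) - 1) ≠ 0 :=
    pow_ne_zero _ <| (ZMod.natCast_eq_zero_iff v p).not.mpr <|
      hp.out.coprime_iff_not_dvd.mp hv.symm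
  calc levelQuotient p r (v + k * p ^ r) = l
      ↔ (levelQuotient p r (v + k * p ^ r) : ZMod p) = l := by
        rw [ZMod.natCast_eq_natCast_iff', Nat.mod_eq_of_lt (levelQuotient_lt hp.out.pos _ _),
          Nat.mod_eq_of_lt hl]
    _ ↔ (k : ZMod p) =
          ((levelQuotient p r v : ZMod p) - l) / (v : ZMod p) ^ (φ (p ^ r) - 1) := by
        rw [levelQuotient_add_mul_pow hp.out hr hv, eq_div_iff hc]
        constructor <;> intro h <;> linear_combination -h
    _ ↔ _ := ⟨fun h => by rw [← h, ZMod.val_natCast_of_lt hk],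
        fun h => by rw [h, ZMod.natCast_zmod_val]⟩

end LevelQuotient

theorem sum_Dl_pow_eq_zero_general (p r l : ℕ) (hp : p.Prime) (hr : 2 ≤ r)
    (hl : l < p) (θ : AlgebraicClosure (ZMod 2)) (h1 : θ ^ p ^ r = 1) (h2 : θ ^ p ≠ 1) :
    ∑ u ∈ (Finset.range (p ^ (r + 1))).filter
        (fun u => Nat.Coprime u p ∧ levelQuotient p r u = l), θ ^ u = 0 := by
  have hr0 : 0 < r := by omega
  have hperiodic (v k : ℕ) : θ ^ (v + k * p ^ r) = θ ^ v := by
    rw [pow_add, pow_mul', h1, one_pow, mul_one]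
  have hfiber (v : ℕ) :
      ∑ k ∈ range p, (if (v + k * p ^ r).Coprime p ∧ levelQuotient p r (v + k * p ^ r) = l
        then θ ^ (v + k * p ^ r) else 0) = if v.Coprime p then θ ^ v else 0 := by
    have := Fact.mk hp
    by_cases hv : v.Coprime p
    · set k₀ := (((levelQuotient p r v : ZMod p) - l) / (v : ZMod p) ^ (φ (p ^ r) - 1)).val
      calc _ = ∑ k ∈ range p, if k = k₀ then θ ^ v else 0 := sum_congr rfl fun k hk => by
              simp only [Nat.coprime_add_mul_pow_left_iff hr0, and_iff_right hv, hperiodic,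
                levelQuotient_add_mul_pow_eq_iff hr0 hv (mem_range.mp hk) hl, k₀]
        _ = _ := by rw [sum_ite_eq', if_pos hv, if_pos (mem_range.mpr (ZMod.val_lt _))]
    · simp [Nat.coprime_add_mul_pow_left_iff hr0, hv]
  have hsplit : p ^ r = p * p ^ (r - 1) := by rw [← pow_succ', Nat.sub_add_cancel hr0]
  rw [sum_filter, pow_succ, sum_range_mul_eq_sum_sum]
  simp only [hfiber]
  rw [hsplit] at h1 ⊢
  exact sum_range_mul_ite_coprime_pow_eq_zero h1 h2

/-- For `θ` in the algebraic closure of `F₂` with `θ^{p^r} = 1` but `θ^p ≠ 1`,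
`Σ_{u ∈ D_l} θ^u = 0`. -/
theorem sum_Dl_pow_eq_zero (p r l : ℕ) (hp : p.Prime) (hodd : Odd p) (hr : 2 ≤ r)
    (hl : l < p) (θ : AlgebraicClosure (ZMod 2)) (h1 : θ ^ p ^ r = 1) (h2 : θ ^ p ≠ 1) :
    ∑ u ∈ (Finset.range (p ^ (r + 1))).filter
        (fun u => Nat.Coprime u p ∧ levelQuotient p r u = l), θ ^ u = 0 :=
  sum_Dl_pow_eq_zero_general p r l hp hr hl θ h1 h2
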